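/- arXiv:2401.11064 — 4 statements merged into one kernel-verified Lean document; each statement's English description precedes it below -/
import Mathlib

section
/- Suppose λ = b·q for an integer b ≥ 1, let c = ⌊λ / 2^w⌋, and let (b_i) be Algorithm 1's sequence with initial value b₀ = c. Then for every index i ≥ 0, f(b_i) ≤ c. -/
/-- `v(x) = ⌊ -x·m / 2^w ⌋` (floor of the rational number `-x*m/2^w`). -/
def algV (w : ℕ) (m x : ℤ) : ℤ := Int.fdiv (-(x * m)) (2 ^ w)

/-- `f(x) = x + v(x)`. -/
def algF (w : ℕ) (m x : ℤ) : ℤ := x + algV w m x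

/-- Algorithm 1's sequence: `b₀ = c`, `b_{i+1} = b_i + (c − f(b_i))`. -/
def alg1 (w : ℕ) (m c : ℤ) : ℕ → ℤ
  | 0 => c
  | i + 1 => alg1 w m c i + (c - algF w m (alg1 w m c i))

lemma algF_eq (w : ℕ) (m x : ℤ) : algF w m x = (x * (2 ^ w - m)) / 2 ^ w := by
  have h2 : (0:ℤ) < 2 ^ w := by positivity
  have : x * (2 ^ w - m) = -(x * m) + x * 2 ^ w := by ring
  rw [algF, algV, Int.fdiv_eq_ediv_of_nonneg _ h2.le, this,
    Int.add_mul_ediv_right _ _ h2.ne']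
  ring

theorem stmt4 (w u : ℕ) (m q lam b c : ℤ) (hu : 1 ≤ u) (huw : u < w)
    (hm : m = 2 ^ u - 1 ∨ m = 2 ^ u + 1) (hq : q = 2 ^ w - m)
    (hb : 1 ≤ b) (hlam : lam = b * q) (hc : c = Int.fdiv lam (2 ^ w)) :
    ∀ i : ℕ, algF w m (alg1 w m c i) ≤ c := by
  have h2 : (0:ℤ) < 2 ^ w := by positivity
  have hm1 : 1 ≤ m := by
    rcases hm with rfl | rfl
    · have : (2:ℤ) ≤ 2 ^ u := by
        calc (2:ℤ) = 2 ^ 1 := by norm_num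
        _ ≤ 2 ^ u := pow_le_pow_right₀ (by norm_num) hu
      omega
    · have : (0:ℤ) ≤ 2 ^ u := by positivity
      omega
  have hmw : m ≤ 2 ^ w := by
    rcases hm with rfl | rfl
    · have : (2:ℤ) ^ u ≤ 2 ^ w := pow_le_pow_right₀ (by norm_num) huw.le
      omega
    · have h1 : (2:ℤ) ^ (u + 1) ≤ 2 ^ w := pow_le_pow_right₀ (by norm_num) huw
      have h2u : (2:ℤ) ^ (u+1) = 2 * 2 ^ u := by ring
      have h1u : (0:ℤ) ≤ 2 ^ u := by positivity
      omega
  have hc' : c = b * (2 ^ w - m) / 2 ^ w := by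
    rw [hc, hlam, hq, Int.fdiv_eq_ediv_of_nonneg _ h2.le]
  -- key invariant : alg1 ≤ b
  have key : ∀ i, alg1 w m c i ≤ b := by
    intro i
    induction i with
    | zero =>
      show c ≤ b
      rw [hc']
      calc b * (2 ^ w - m) / 2 ^ w ≤ b * 2 ^ w / 2 ^ w := by
            apply Int.ediv_le_ediv h2
            exact mul_le_mul_of_nonneg_left (by omega) (by omega)
        _ = b := Int.mul_ediv_cancel _ h2.ne'
    | succ i ih =>
      show alg1 w m c i + (c - algF w m (alg1 w m c i)) ≤ b
      set x := alg1 w m c i with hx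
      have : algV w m x = (-(x * m)) / 2 ^ w := Int.fdiv_eq_ediv_of_nonneg _ h2.le
      have hgoal : c ≤ b + (-(x * m)) / 2 ^ w := by
        rw [hc']
        have hbm : b * (2 ^ w - m) = -(b * m) + b * 2 ^ w := by ring
        rw [hbm, Int.add_mul_ediv_right _ _ h2.ne']
        have : (-(b * m)) / 2 ^ w ≤ (-(x * m)) / 2 ^ w := by
          apply Int.ediv_le_ediv h2
          have := mul_le_mul_of_nonneg_right ih (by omega : (0:ℤ) ≤ m)
          omega
        omega
      have : algF w m x = x + (-(x * m)) / 2 ^ w := by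
        rw [algF, this]
      omega
  intro i
  have hle := key i
  calc algF w m (alg1 w m c i) = alg1 w m c i * (2 ^ w - m) / 2 ^ w := algF_eq ..
    _ ≤ b * (2 ^ w - m) / 2 ^ w :=
        Int.ediv_le_ediv h2 (mul_le_mul_of_nonneg_right hle (by omega))
    _ = c := hc'.symm
end

section
/- (Theorem 1, termination) Suppose λ = b·q for an integer b ≥ 1, let c = ⌊λ / 2^w⌋, and let (b_i) be Algorithm 1's sequence with initial value b₀ = c. Then there exists an index N such that f(b_N) = c; i.e., the sequence reaches a fixed point after finitely many iterations. -/
theorem stmt5 (w u : ℕ) (m q lam b c : ℤ) (hu : 1 ≤ u) (huw : u < w)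
    (hm : m = 2 ^ u - 1 ∨ m = 2 ^ u + 1) (hq : q = 2 ^ w - m)
    (hb : 1 ≤ b) (hlam : lam = b * q) (hc : c = Int.fdiv lam (2 ^ w)) :
    ∃ N : ℕ, algF w m (alg1 w m c N) = c := by
  set P : ℤ := 2 ^ w with hPdef
  have hP : (0 : ℤ) < P := by positivity
  have h2u : (2:ℤ) ≤ 2 ^ u := by
    calc (2:ℤ) = 2 ^ 1 := by norm_num
    _ ≤ 2 ^ u := pow_le_pow_right₀ (by norm_num) hu
  have hpow : (2:ℤ) ^ u * 2 ≤ P := by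
    rw [hPdef]
    calc (2:ℤ) ^ u * 2 = 2 ^ (u + 1) := by ring
    _ ≤ 2 ^ w := pow_le_pow_right₀ (by norm_num) (by omega)
  have hm1 : 1 ≤ m := by rcases hm with h | h <;> omega
  have hmP : m + 1 ≤ P := by rcases hm with h | h <;> omega
  have hq1 : 1 ≤ q := by omega
  have hc0 : 0 ≤ c := by
    rw [hc]
    exact Int.fdiv_nonneg (by nlinarith) (le_of_lt hP)
  -- antitonicity of v
  have hv_anti : ∀ x y : ℤ, x ≤ y → algV w m y ≤ algV w m x := by
    intro x y hxy
    unfold algV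
    rw [Int.fdiv_eq_ediv_of_nonneg _ (le_of_lt hP), Int.fdiv_eq_ediv_of_nonneg _ (le_of_lt hP)]
    exact Int.ediv_le_ediv hP (by nlinarith)
  have hv0 : algV w m 0 = 0 := by
    unfold algV; simp
  have hvc : algV w m c ≤ 0 := by
    have := hv_anti 0 c hc0
    rwa [hv0] at this
  -- recurrence
  have key : ∀ i, alg1 w m c (i + 1) = c - algV w m (alg1 w m c i) := by
    intro i; simp only [alg1, algF]; ring
  -- monotone
  have mono : ∀ i, alg1 w m c i ≤ alg1 w m c (i + 1) := by
    intro i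
    induction i with
    | zero =>
      rw [key 0]
      simp only [alg1]
      omega
    | succ n ih =>
      rw [key n, key (n + 1)]
      have := hv_anti _ _ ih
      omega
  -- bound
  set B : ℤ := (c + 1) * P with hBdef
  have hcB : c ≤ B := by nlinarith
  have hvB : c - B ≤ algV w m B := by
    unfold algV
    rw [Int.fdiv_eq_ediv_of_nonneg _ (le_of_lt hP)]
    rw [Int.le_ediv_iff_mul_le hP]
    have : P - m = q := by omega
    nlinarith
  have bound : ∀ i, alg1 w m c i ≤ B := by
    intro i
    induction i with
    | zero => simpa [alg1] using hcB
    | succ n ih =>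
      rw [key n]
      have := hv_anti _ _ ih
      omega
  by_contra hcon
  push_neg at hcon
  have step : ∀ i, alg1 w m c i + 1 ≤ alg1 w m c (i + 1) := by
    intro i
    have h1 := mono i
    have h2 : alg1 w m c (i + 1) ≠ alg1 w m c i := by
      intro h
      apply hcon i
      have := key i
      unfold algF
      omega
    omega
  have grow : ∀ n : ℕ, c + n ≤ alg1 w m c n := by
    intro n
    induction n with
    | zero => simp [alg1]
    | succ k ih =>
      have := step k
      push_cast
      push_cast at ih
      omega
  have hn : 0 ≤ B - c + 1 := by omega
  have := grow (B - c + 1).toNat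
  have hB := bound (B - c + 1).toNat
  rw [Int.toNat_of_nonneg hn] at this
  omega
end

section
/- (Theorem 2) Suppose λ = b·q for an integer b ≥ 1, let c = ⌊λ / 2^w⌋, and let (b_i) be Algorithm 1's sequence with initial value b₀ = c. Then b_i ≤ b for every index i ≥ 0. -/
theorem stmt6 (w u : ℕ) (m q lam b c : ℤ) (hu : 1 ≤ u) (huw : u < w)
    (hm : m = 2 ^ u - 1 ∨ m = 2 ^ u + 1) (hq : q = 2 ^ w - m)
    (hb : 1 ≤ b) (hlam : lam = b * q) (hc : c = Int.fdiv lam (2 ^ w)) :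
    ∀ i : ℕ, alg1 w m c i ≤ b := by
  have hpow : (0:ℤ) < 2 ^ w := by positivity
  have hm0 : (0:ℤ) ≤ m := by
    rcases hm with h | h <;> subst h <;> nlinarith [pow_pos (by norm_num : (0:ℤ) < 2) u]
  have hcb : c = b + (-(b * m)) / 2 ^ w := by
    have : lam = -(b * m) + b * 2 ^ w := by rw [hlam, hq]; ring
    rw [hc, Int.fdiv_eq_ediv_of_nonneg _ hpow.le, this, Int.add_mul_ediv_right _ _ hpow.ne']
    ring
  have key : ∀ x : ℤ, x ≤ b → c - algV w m x ≤ b := by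
    intro x hx
    have h1 : (-(b * m)) / 2 ^ w ≤ (-(x * m)) / 2 ^ w := by
      apply Int.ediv_le_ediv hpow
      nlinarith
    rw [algV, Int.fdiv_eq_ediv_of_nonneg _ hpow.le]
    omega
  have hc0 : c ≤ b := by
    have h1 : (-(b * m)) / 2 ^ w ≤ 0 := by
      have := Int.ediv_le_ediv hpow (show -(b * m) ≤ 0 by nlinarith)
      simpa using this
    omega
  intro i
  induction i with
  | zero => exact hc0
  | succ n ih =>
    have : alg1 w m c (n + 1) = c - algV w m (alg1 w m c n) := by
      simp [alg1, algF]; ring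
    rw [this]
    exact key _ ih
end

section
/- Assume additionally that 2m < 2^w. Then for every integer b, f(b − 2) equals f(b) − 1 or f(b) − 2. Consequently, if c = f(b), then f(b − 2) ≠ c. -/
theorem stmt8 (w u : ℕ) (m : ℤ) (hu : 1 ≤ u) (huw : u < w)
    (hm : m = 2 ^ u - 1 ∨ m = 2 ^ u + 1) (h2m : 2 * m < 2 ^ w) (b : ℤ) :
    (algF w m (b - 2) = algF w m b - 1 ∨ algF w m (b - 2) = algF w m b - 2) ∧
      algF w m (b - 2) ≠ algF w m b := by
  have hN : (0:ℤ) < 2 ^ w := by positivity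
  have h2u : (2:ℤ) ≤ 2 ^ u := by
    calc (2:ℤ) = 2 ^ 1 := by norm_num
    _ ≤ 2 ^ u := pow_le_pow_right₀ (by norm_num) hu
  have hm1 : (1:ℤ) ≤ m := by rcases hm with h | h <;> omega
  set A := -(b * m) with hA
  have e1 : algV w m b = A / 2 ^ w := Int.fdiv_eq_ediv_of_nonneg _ hN.le
  have e2 : algV w m (b - 2) = (A + 2 * m) / 2 ^ w := by
    have : -((b - 2) * m) = A + 2 * m := by ring
    rw [algV, this, Int.fdiv_eq_ediv_of_nonneg _ hN.le]
  have h1 : A / 2 ^ w ≤ (A + 2 * m) / 2 ^ w := Int.ediv_le_ediv hN (by linarith)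
  have h2 : (A + 2 * m) / 2 ^ w ≤ (A + 1 * 2 ^ w) / 2 ^ w :=
    Int.ediv_le_ediv hN (by linarith)
  have h3 : (A + 1 * 2 ^ w) / 2 ^ w = A / 2 ^ w + 1 :=
    Int.add_mul_ediv_right A 1 hN.ne'
  simp only [algF, e1, e2]
  omega
end
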